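/- arXiv:1503.06303 — 5 statements merged into one kernel-verified Lean document; each statement's English description precedes it below -/
import Mathlib

section
/- Let d ≥ 2 and let ρ be a density matrix on ℂ^d (a positive semidefinite d×d complex matrix with trace 1). Then C(ρ)²/(d-1)² + M(ρ) ≤ 1, where C(ρ) is the l1-norm of coherence of ρ and M(ρ) is its mixedness. -/
open scoped ComplexOrder

/-- The `l₁`-norm of coherence of a matrix `ρ` (in the standard basis):
the sum of the absolute values of the off-diagonal entries. -/
noncomputable def l1Coherence {d : ℕ} (ρ : Matrix (Fin d) (Fin d) ℂ) : ℝ :=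
  ∑ i, ∑ j, if i = j then 0 else ‖ρ i j‖

/-- The mixedness (normalized linear entropy) of a `d × d` density matrix `ρ`:
`(d/(d-1)) * (1 - Tr(ρ²))`. -/
noncomputable def mixedness (d : ℕ) (ρ : Matrix (Fin d) (Fin d) ℂ) : ℝ :=
  ((d : ℝ) / ((d : ℝ) - 1)) * (1 - ((ρ * ρ).trace).re)

/-!
Split the purity `Tr ρ² = ∑ᵢ ρᵢᵢ² + ∑_{i ≠ j} |ρᵢⱼ|²` into its diagonal and off-diagonal parts
and apply Cauchy–Schwarz to each: the `d` diagonal entries sum to `1`, so their squares sum to at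
least `1/d`, and the `d(d-1)` off-diagonal moduli sum to `C(ρ)`, so their squares sum to at least
`C(ρ)²/(d(d-1))`. Hence `C(ρ)² ≤ (d-1)(d Tr ρ² - 1)`, which rearranges to the claim.
-/

theorem Finset.sum_sum_eq_sum_diag_add_sum_offDiag {ι M : Type*} [Fintype ι] [DecidableEq ι]
    [AddCommMonoid M] (f : ι → ι → M) :
    ∑ i, ∑ j, f i j = ∑ i, f i i + ∑ p ∈ univ.offDiag, f p.1 p.2 := by
  rw [← sum_product' univ univ f, ← diag_union_offDiag, sum_union (disjoint_diag_offDiag _),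
    sum_diag]

theorem Matrix.IsHermitian.re_trace_mul_self {𝕜 n : Type*} [RCLike 𝕜] [Fintype n]
    {A : Matrix n n 𝕜} (hA : A.IsHermitian) :
    RCLike.re (A * A).trace = ∑ i, ∑ j, ‖A i j‖ ^ 2 := by
  have hentry (i j : n) : A i j * A j i = (‖A i j‖ ^ 2 : ℝ) := by
    rw [← hA.apply j i, RCLike.star_def, RCLike.mul_conj, RCLike.ofReal_pow]
  simp only [Matrix.trace, Matrix.diag, Matrix.mul_apply, hentry, ← RCLike.ofReal_sum,
    RCLike.ofReal_re]

theorem Matrix.one_le_card_mul_sum_norm_diag_sq {𝕜 n : Type*} [RCLike 𝕜] [Fintype n]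
    {A : Matrix n n 𝕜} (hA : A.trace = 1) :
    1 ≤ Fintype.card n * ∑ i, ‖A i i‖ ^ 2 := by
  have hre : ∑ i, RCLike.re (A i i) = 1 := by
    simpa [Matrix.trace] using congrArg RCLike.re hA
  calc (1 : ℝ) = (∑ i, RCLike.re (A i i)) ^ 2 := by rw [hre, one_pow]
    _ ≤ Fintype.card n * ∑ i, RCLike.re (A i i) ^ 2 := sq_sum_le_card_mul_sum_sq
    _ ≤ Fintype.card n * ∑ i, ‖A i i‖ ^ 2 := by
      refine mul_le_mul_of_nonneg_left (Finset.sum_le_sum fun i _ => ?_) (Nat.cast_nonneg _)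
      simpa only [sq_abs] using pow_le_pow_left₀ (abs_nonneg _) (RCLike.abs_re_le_norm (A i i)) 2

theorem l1Coherence_eq_sum_offDiag {d : ℕ} (ρ : Matrix (Fin d) (Fin d) ℂ) :
    l1Coherence ρ = ∑ p ∈ Finset.univ.offDiag, ‖ρ p.1 p.2‖ := by
  rw [l1Coherence, Finset.sum_sum_eq_sum_diag_add_sum_offDiag]
  simp only [if_true, Finset.sum_const_zero, zero_add]
  exact Finset.sum_congr rfl fun p hp => if_neg (Finset.mem_offDiag.mp hp).2.2

theorem l1Coherence_sq_le {d : ℕ} (ρ : Matrix (Fin d) (Fin d) ℂ) :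
    l1Coherence ρ ^ 2 ≤ d * (d - 1) * ∑ p ∈ Finset.univ.offDiag, ‖ρ p.1 p.2‖ ^ 2 := by
  have hcard : ((Finset.univ : Finset (Fin d)).offDiag.card : ℝ) = d * (d - 1) := by
    rw [Finset.offDiag_card, Finset.card_univ, Fintype.card_fin, Nat.cast_sub (Nat.le_mul_self d)]
    push_cast
    ring
  rw [l1Coherence_eq_sum_offDiag, ← hcard]
  exact sq_sum_le_card_mul_sum_sq

theorem l1Coherence_sq_le_mul_purity {d : ℕ} {ρ : Matrix (Fin d) (Fin d) ℂ}
    (hρ : ρ.IsHermitian) (htr : ρ.trace = 1) :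
    l1Coherence ρ ^ 2 ≤ (d - 1) * (d * ((ρ * ρ).trace).re - 1) := by
  have hd : (1 : ℝ) ≤ d := by
    rcases d with _ | d
    · simp at htr
    · simp
  have hdiag := Matrix.one_le_card_mul_sum_norm_diag_sq htr
  rw [Fintype.card_fin] at hdiag
  have hoff := l1Coherence_sq_le ρ
  have hpurity := hρ.re_trace_mul_self
  rw [RCLike.re_to_complex, Finset.sum_sum_eq_sum_diag_add_sum_offDiag] at hpurity
  rw [hpurity]
  linarith [mul_le_mul_of_nonneg_left hdiag (sub_nonneg.mpr hd)]

/-- **Trade-off between coherence and mixedness.**  For any density matrix `ρ` on `ℂ^d`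
(`d ≥ 2`), one has `C(ρ)²/(d-1)² + M(ρ) ≤ 1`. -/
theorem coherence_mixedness_tradeoff {d : ℕ} (hd : 2 ≤ d)
    (ρ : Matrix (Fin d) (Fin d) ℂ) (hpsd : ρ.PosSemidef) (htr : ρ.trace = 1) :
    l1Coherence ρ ^ 2 / ((d : ℝ) - 1) ^ 2 + mixedness d ρ ≤ 1 := by
  have hd1 : (0 : ℝ) < d - 1 := by
    rw [sub_pos]
    exact_mod_cast hd
  have key := l1Coherence_sq_le_mul_purity hpsd.isHermitian htr
  rw [mixedness, div_add' _ _ _ (by positivity), div_le_one (by positivity)]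
  calc l1Coherence ρ ^ 2 + (d : ℝ) / (d - 1) * (1 - ((ρ * ρ).trace).re) * (d - 1) ^ 2
      = l1Coherence ρ ^ 2 + (d - 1) * (1 - d * ((ρ * ρ).trace).re) + ((d : ℝ) - 1) ^ 2 := by
        field_simp
        ring
    _ ≤ ((d : ℝ) - 1) ^ 2 := by linarith
end

section
/- Let ρ be a 2×2 density matrix, written as ρ = [[a, c],[c̄, 1−a]] with a real, 0 ≤ a ≤ 1, and |c|² ≤ a(1−a). Then C(ρ)² + M(ρ) = 4a(1−a) ≤ 1, where C(ρ) = 2|c| is the l1-norm of coherence and M(ρ) = 2(1 − Tr(ρ²)) = 4a(1−a) − 4|c|² is the mixedness; moreover equality C(ρ)² + M(ρ) = 1 holds if and only if a = 1/2. -/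
open scoped ComplexOrder

/-!
For `ρ = !![a, c; c̄, 1 - a]` the only off-diagonal entries are `c` and `c̄`, so `C(ρ) = 2|c|`,
while `Tr(ρ²) = a² + (1 - a)² + 2|c|²`, so `M(ρ) = 4a(1 - a) - 4|c|²`. The `|c|²` terms cancel in
`C(ρ)² + M(ρ)`, leaving `4a(1 - a) = 1 - (2a - 1)²`, which is at most `1` with equality
exactly at `a = 1/2`.
-/

theorem l1Coherence_fin_two (ρ : Matrix (Fin 2) (Fin 2) ℂ) :
    l1Coherence ρ = ‖ρ 0 1‖ + ‖ρ 1 0‖ := by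
  simp [l1Coherence, Fin.sum_univ_two]

theorem mixedness_two (ρ : Matrix (Fin 2) (Fin 2) ℂ) :
    mixedness 2 ρ = 2 * (1 - (ρ * ρ).trace.re) := by
  norm_num [mixedness]

theorem Matrix.trace_mul_self_fin_two {R : Type*} [CommRing R] (a b c d : R) :
    (!![a, b; c, d] * !![a, b; c, d]).trace = a ^ 2 + d ^ 2 + 2 * (b * c) := by
  rw [Matrix.mul_fin_two, Matrix.trace_fin_two_of]
  ring

theorem l1Coherence_qubit (a : ℝ) (c : ℂ) :
    l1Coherence !![(a : ℂ), c; (starRingEnd ℂ) c, 1 - (a : ℂ)] = 2 * ‖c‖ := by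
  rw [l1Coherence_fin_two]
  simp only [Matrix.of_apply, Matrix.cons_val', Matrix.cons_val_zero, Matrix.cons_val_one,
    Matrix.empty_val', Matrix.cons_val_fin_one, Complex.norm_conj]
  ring

theorem mixedness_qubit (a : ℝ) (c : ℂ) :
    mixedness 2 !![(a : ℂ), c; (starRingEnd ℂ) c, 1 - (a : ℂ)] =
      4 * a * (1 - a) - 4 * ‖c‖ ^ 2 := by
  have htrace : (!![(a : ℂ), c; (starRingEnd ℂ) c, 1 - (a : ℂ)] *
      !![(a : ℂ), c; (starRingEnd ℂ) c, 1 - (a : ℂ)]).trace =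
        ((a ^ 2 + (1 - a) ^ 2 + 2 * ‖c‖ ^ 2 : ℝ) : ℂ) := by
    rw [Matrix.trace_mul_self_fin_two, Complex.mul_conj, Complex.normSq_eq_norm_sq]
    push_cast
    ring
  rw [mixedness_two, htrace, Complex.ofReal_re]
  ring

theorem four_mul_mul_one_sub_le_one (a : ℝ) : 4 * a * (1 - a) ≤ 1 := by
  nlinarith [sq_nonneg (2 * a - 1)]

theorem four_mul_mul_one_sub_eq_one_iff {a : ℝ} : 4 * a * (1 - a) = 1 ↔ a = 1 / 2 := by
  have hsq : 4 * a * (1 - a) = 1 - (2 * a - 1) ^ 2 := by ring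
  rw [hsq, sub_eq_self, pow_eq_zero_iff two_ne_zero, sub_eq_zero]
  constructor <;> intro h <;> linarith

theorem qubit_coherence_mixedness_tradeoff_general (a : ℝ) (c : ℂ)
    (ρ : Matrix (Fin 2) (Fin 2) ℂ)
    (hρ : ρ = !![(a : ℂ), c; (starRingEnd ℂ) c, 1 - (a : ℂ)]) :
    l1Coherence ρ = 2 * ‖c‖ ∧
    mixedness 2 ρ = 4 * a * (1 - a) - 4 * ‖c‖ ^ 2 ∧
    l1Coherence ρ ^ 2 + mixedness 2 ρ = 4 * a * (1 - a) ∧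
    4 * a * (1 - a) ≤ 1 ∧
    (l1Coherence ρ ^ 2 + mixedness 2 ρ = 1 ↔ a = 1 / 2) := by
  subst hρ
  rw [l1Coherence_qubit, mixedness_qubit]
  have hsum : (2 * ‖c‖) ^ 2 + (4 * a * (1 - a) - 4 * ‖c‖ ^ 2) = 4 * a * (1 - a) := by ring
  rw [hsum, four_mul_mul_one_sub_eq_one_iff]
  exact ⟨rfl, rfl, rfl, four_mul_mul_one_sub_le_one a, Iff.rfl⟩

/-- **Coherence–mixedness trade-off for qubits.**  For a qubit density matrix
`ρ = !![a, c; conj c, 1 - a]` (with `a` real, `0 ≤ a ≤ 1`, `|c|² ≤ a(1-a)`) one has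
`C(ρ) = 2|c|`, `M(ρ) = 4a(1-a) - 4|c|²`, hence `C(ρ)² + M(ρ) = 4a(1-a) ≤ 1`, with
`C(ρ)² + M(ρ) = 1` if and only if `a = 1/2`. -/
theorem qubit_coherence_mixedness_tradeoff (a : ℝ) (c : ℂ)
    (ha0 : 0 ≤ a) (ha1 : a ≤ 1) (hc : ‖c‖ ^ 2 ≤ a * (1 - a))
    (ρ : Matrix (Fin 2) (Fin 2) ℂ)
    (hρ : ρ = !![(a : ℂ), c; (starRingEnd ℂ) c, 1 - (a : ℂ)]) :
    l1Coherence ρ = 2 * ‖c‖ ∧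
    mixedness 2 ρ = 4 * a * (1 - a) - 4 * ‖c‖ ^ 2 ∧
    l1Coherence ρ ^ 2 + mixedness 2 ρ = 4 * a * (1 - a) ∧
    4 * a * (1 - a) ≤ 1 ∧
    (l1Coherence ρ ^ 2 + mixedness 2 ρ = 1 ↔ a = 1 / 2) :=
  qubit_coherence_mixedness_tradeoff_general a c ρ hρ
end

section
/- Let d ≥ 2 and 0 ≤ p ≤ 1. Define the maximally coherent mixed state ρ_m = ((1−p)/d)·I_d + p·|ψ_d⟩⟨ψ_d|, where |ψ_d⟩ = (1/√d)·Σ_{i=1}^{d} |i⟩ is the maximally coherent pure state; equivalently, ρ_m is the d×d matrix whose diagonal entries all equal 1/d and whose off-diagonal entries all equal p/d. Then ρ_m is a density matrix (positive semidefinite with trace 1), its l1-norm of coherence is C(ρ_m) = (d−1)p, its mixedness is M(ρ_m) = 1 − p², and it satisfies the complementarity relation C(ρ_m)²/(d−1)² + M(ρ_m) = 1. -/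
open scoped ComplexOrder

/-- The maximally coherent mixed state `ρ_m = ((1-p)/d) I + p |ψ_d⟩⟨ψ_d|`:
diagonal entries all `1/d`, off-diagonal entries all `p/d`. -/
noncomputable def mcms (d : ℕ) (p : ℝ) : Matrix (Fin d) (Fin d) ℂ :=
  Matrix.of fun i j => if i = j then (1 / d : ℂ) else ((p : ℂ) / d)

/-!
`ρ_m = ((1 - p)/d) • 1 + (p/d) • J` with `J = 𝟙 𝟙ᴴ` the all-ones matrix, a sum of positive
semidefinite matrices with nonnegative weights. Every other quantity is a sum over the entries of
a matrix that is constant on and constant off the diagonal; in particular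
`Tr ρ_m² = ∑ᵢⱼ ρᵢⱼ ρⱼᵢ = d (1/d)² + d (d - 1) (p/d)²`.
-/

namespace Matrix

variable {ι R : Type*} [DecidableEq ι]

theorem of_ite_eq_smul_one_add [CommRing R] (a b : R) :
    (of fun i j : ι => if i = j then a else b) = (a - b) • 1 + b • vecMulVec 1 1 := by
  ext i j
  by_cases h : i = j <;> simp [h]

variable [Fintype ι]

theorem sum_ite_eq_card_smul_add [AddCommGroup R] (i : ι) (a b : R) :
    ∑ j, (if i = j then a else b) = Fintype.card ι • b + (a - b) := by
  have h : ∀ j, (if i = j then a else b) = b + if i = j then a - b else 0 := by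
    intro j; split_ifs <;> abel
  simp [h, Finset.sum_add_distrib]

theorem trace_of_ite [CommRing R] (a b : R) :
    trace (of fun i j : ι => if i = j then a else b) = Fintype.card ι • a := by
  simp [trace]

theorem trace_of_ite_mul_self [CommRing R] (a b : R) :
    trace ((of fun i j : ι => if i = j then a else b) * of fun i j => if i = j then a else b)
      = Fintype.card ι • (a ^ 2 + (Fintype.card ι - 1 : R) * b ^ 2) := by
  have hentry : ∀ i j : ι, (if i = j then a else b) * (if j = i then a else b)
      = if i = j then a ^ 2 else b ^ 2 := by
    intro i j
    by_cases h : i = j <;> simp [h, eq_comm, sq]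
  simp only [trace, diag, mul_apply, of_apply, hentry, sum_ite_eq_card_smul_add,
    Finset.sum_const, Finset.card_univ, nsmul_eq_mul]
  ring

end Matrix

open Matrix

theorem l1Coherence_of_ite {d : ℕ} (a b : ℂ) :
    l1Coherence (of fun i j : Fin d => if i = j then a else b) = d * (d - 1) * ‖b‖ := by
  have hentry : ∀ i j : Fin d, (if i = j then 0 else ‖if i = j then a else b‖)
      = if i = j then 0 else ‖b‖ := by
    intro i j; split_ifs <;> rfl
  simp only [l1Coherence, of_apply, hentry, sum_ite_eq_card_smul_add, Finset.sum_const,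
    Finset.card_univ, Fintype.card_fin, nsmul_eq_mul]
  ring

theorem mcms_posSemidef {d : ℕ} {p : ℝ} (hp0 : 0 ≤ p) (hp1 : p ≤ 1) : (mcms d p).PosSemidef := by
  have hdiag : (1 / d - p / d : ℂ) = ((1 - p) / d : ℝ) := by push_cast; ring
  have hoff : ((p : ℂ) / d) = (p / d : ℝ) := by push_cast; ring
  have hones : (vecMulVec 1 1 : Matrix (Fin d) (Fin d) ℂ).PosSemidef := by
    simpa using posSemidef_vecMulVec_self_star (1 : Fin d → ℂ)
  rw [mcms, of_ite_eq_smul_one_add, hdiag, hoff]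
  exact (PosSemidef.one.smul (Complex.zero_le_real.mpr (by bound))).add
    (hones.smul (Complex.zero_le_real.mpr (by positivity)))

theorem mcms_trace {d : ℕ} (hd : d ≠ 0) (p : ℝ) : (mcms d p).trace = 1 := by
  rw [mcms, trace_of_ite, Fintype.card_fin, nsmul_eq_mul]
  field_simp

theorem mcms_l1Coherence {d : ℕ} (hd : d ≠ 0) {p : ℝ} (hp0 : 0 ≤ p) :
    l1Coherence (mcms d p) = (d - 1) * p := by
  rw [mcms, l1Coherence_of_ite, norm_div, Complex.norm_real, Complex.norm_natCast,
    Real.norm_of_nonneg hp0]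
  field_simp

theorem mcms_trace_mul_self {d : ℕ} (hd : d ≠ 0) (p : ℝ) :
    (mcms d p * mcms d p).trace = ((1 + (d - 1) * p ^ 2) / d : ℝ) := by
  rw [mcms, trace_of_ite_mul_self, Fintype.card_fin, nsmul_eq_mul]
  push_cast
  field_simp

theorem mcms_mixedness {d : ℕ} (hd : 2 ≤ d) (p : ℝ) : mixedness d (mcms d p) = 1 - p ^ 2 := by
  have hd1 : (d : ℝ) - 1 ≠ 0 := sub_ne_zero.mpr (by exact_mod_cast (by omega : d ≠ 1))
  rw [mixedness, mcms_trace_mul_self (by omega), Complex.ofReal_re]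
  field_simp
  ring

/-- **Maximally coherent mixed states.**  For `d ≥ 2` and `0 ≤ p ≤ 1`, the state
`ρ_m = ((1-p)/d) I + p |ψ_d⟩⟨ψ_d|` is a density matrix with coherence `C(ρ_m) = (d-1)p`
and mixedness `M(ρ_m) = 1 - p²`, saturating the complementarity relation
`C(ρ_m)²/(d-1)² + M(ρ_m) = 1`. -/
theorem mcms_complementarity {d : ℕ} (hd : 2 ≤ d) (p : ℝ) (hp0 : 0 ≤ p) (hp1 : p ≤ 1) :
    (mcms d p).PosSemidef ∧
    (mcms d p).trace = 1 ∧
    l1Coherence (mcms d p) = ((d : ℝ) - 1) * p ∧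
    mixedness d (mcms d p) = 1 - p ^ 2 ∧
    l1Coherence (mcms d p) ^ 2 / ((d : ℝ) - 1) ^ 2 + mixedness d (mcms d p) = 1 := by
  have hd0 : d ≠ 0 := by omega
  have hd1 : (d : ℝ) - 1 ≠ 0 := sub_ne_zero.mpr (by exact_mod_cast (by omega : d ≠ 1))
  refine ⟨mcms_posSemidef hp0 hp1, mcms_trace hd0 p, mcms_l1Coherence hd0 hp0,
    mcms_mixedness hd p, ?_⟩
  rw [mcms_l1Coherence hd0 hp0, mcms_mixedness hd p]
  field_simp
  ring
end

section
/- Let ρ = [[a, c],[c̄, 1−a]] be a qubit density matrix, i.e. a real with 0 ≤ a ≤ 1 and |c|² ≤ a(1−a). Then its geometric coherence C_g(ρ) = (1 − √(1 − 4|c|²))/2 and its geometric mixedness M_g(ρ) = (1 + 2√(a(1−a) − |c|²))/2 satisfy the trade-off C_g(ρ) + M_g(ρ) ≤ 1, with equality if and only if a = 1/2. -/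
/-! With `v = 1 - 4|c|²`, the identity `v = (2a - 1)² + 4(a(1 - a) - |c|²)` turns
`2 M_g - 1` into `√(v - (2a - 1)²)` and `1 - 2 C_g` into `√v`, so the trade-off is the monotonicity
of the square root, with equality exactly when `(2a - 1)² = 0`. -/

lemma Real.sqrt_sub_sq_le (x d : ℝ) : √(x - d ^ 2) ≤ √x :=
  Real.sqrt_le_sqrt (sub_le_self x (sq_nonneg d))

lemma Real.sqrt_sub_sq_eq_sqrt_iff {x d : ℝ} (h : d ^ 2 ≤ x) : √(x - d ^ 2) = √x ↔ d = 0 := by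
  rw [Real.sqrt_inj (sub_nonneg.2 h) ((sq_nonneg d).trans h), sub_eq_self, pow_eq_zero_iff two_ne_zero]

lemma two_mul_sqrt_mul_one_sub_sub (a t : ℝ) :
    2 * √(a * (1 - a) - t) = √((1 - 4 * t) - (2 * a - 1) ^ 2) := by
  rw [show (1 - 4 * t) - (2 * a - 1) ^ 2 = 2 ^ 2 * (a * (1 - a) - t) by ring,
    Real.sqrt_mul (sq_nonneg 2), Real.sqrt_sq zero_le_two]

theorem qubit_geometric_coherence_mixedness_tradeoff_general (a : ℝ) (c : ℂ)
    (hc : ‖c‖ ^ 2 ≤ a * (1 - a))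
    (Cg Mg : ℝ)
    (hCg : Cg = (1 - Real.sqrt (1 - 4 * ‖c‖ ^ 2)) / 2)
    (hMg : Mg = (1 + 2 * Real.sqrt (a * (1 - a) - ‖c‖ ^ 2)) / 2) :
    Cg + Mg ≤ 1 ∧ (Cg + Mg = 1 ↔ a = 1 / 2) := by
  set v := 1 - 4 * ‖c‖ ^ 2
  have hsum : Cg + Mg = 1 + (√(v - (2 * a - 1) ^ 2) - √v) / 2 := by
    rw [hCg, hMg, two_mul_sqrt_mul_one_sub_sub]
    ring
  have hd : (2 * a - 1) ^ 2 ≤ v := by linarith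
  refine ⟨by linarith [Real.sqrt_sub_sq_le v (2 * a - 1)], ?_⟩
  have hsum_eq : Cg + Mg = 1 ↔ √(v - (2 * a - 1) ^ 2) = √v := by
    constructor <;> intro h <;> linarith
  rw [hsum_eq, Real.sqrt_sub_sq_eq_sqrt_iff hd]
  constructor <;> intro h <;> linarith

/-- **Trade-off between geometric coherence and geometric mixedness for qubits.**
For a qubit density matrix `ρ = !![a, c; conj c, 1 - a]` (with `a` real, `0 ≤ a ≤ 1`,
`|c|² ≤ a(1-a)`), the geometric coherence `C_g(ρ) = (1 - √(1 - 4|c|²))/2` and the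
geometric mixedness `M_g(ρ) = (1 + 2√(a(1-a) - |c|²))/2` satisfy `C_g(ρ) + M_g(ρ) ≤ 1`,
with equality if and only if `a = 1/2`. -/
theorem qubit_geometric_coherence_mixedness_tradeoff (a : ℝ) (c : ℂ)
    (ha0 : 0 ≤ a) (ha1 : a ≤ 1) (hc : ‖c‖ ^ 2 ≤ a * (1 - a))
    (Cg Mg : ℝ)
    (hCg : Cg = (1 - Real.sqrt (1 - 4 * ‖c‖ ^ 2)) / 2)
    (hMg : Mg = (1 + 2 * Real.sqrt (a * (1 - a) - ‖c‖ ^ 2)) / 2) :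
    Cg + Mg ≤ 1 ∧ (Cg + Mg = 1 ↔ a = 1 / 2) :=
  qubit_geometric_coherence_mixedness_tradeoff_general a c hc Cg Mg hCg hMg
end

section
/- Let α ≥ 0 and for a real parameter a let ρ(a) denote the 2×2 matrix [[a, α],[α, 1−a]]. Suppose a₁, a₂ satisfy a₁ ≤ a₂ ≤ 1 − a₁ and a₁ ≠ 1/2, and set p = (1 − a₁ − a₂)/(1 − 2a₁). Then 0 ≤ p ≤ 1 and ρ(a₂) = p·ρ(a₁) + (1 − p)·σ_x·ρ(a₁)·σ_x, where σ_x = [[0,1],[1,0]]. In particular, any two qubit states of the above form with the same off-diagonal entry α (hence the same l1-norm of coherence 2α) are connected by a mixture of incoherent unitaries, i.e. by a mixed-unitary channel built from the identity and σ_x. -/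
/-- The matrix `ρ(a) = !![a, α; α, 1-a]` with fixed off-diagonal entry `α`. -/
noncomputable def rhoFixedCoh (α a : ℝ) : Matrix (Fin 2) (Fin 2) ℂ :=
  !![(a : ℂ), (α : ℂ); (α : ℂ), 1 - (a : ℂ)]

/-- The Pauli matrix `σ_x`, an incoherent unitary. -/
def sigmaX : Matrix (Fin 2) (Fin 2) ℂ := !![0, 1; 1, 0]

/-! Conjugation by `σ_x` swaps the diagonal entries, so `ρ(a₁)` and `σ_x ρ(a₁) σ_x = ρ(1 - a₁)`
lie on the line `a ↦ ρ(a)`, which is affine in `a`. Mixing them with weights `p, 1 - p` gives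
`ρ(p a₁ + (1 - p)(1 - a₁))`, and the given `p` is the unique weight that makes this `ρ(a₂)`;
`a₁ ≤ a₂ ≤ 1 - a₁` says exactly that `a₂` lies between `a₁` and `1 - a₁`, i.e. `p ∈ [0, 1]`. -/

theorem sigmaX_mul_rhoFixedCoh_mul_sigmaX (α a : ℝ) :
    sigmaX * rhoFixedCoh α a * sigmaX = rhoFixedCoh α (1 - a) := by
  ext i j
  fin_cases i <;> fin_cases j <;> simp [rhoFixedCoh, sigmaX, Matrix.mul_apply]

theorem smul_rhoFixedCoh_add_one_sub_smul_rhoFixedCoh (α p a b : ℝ) :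
    (p : ℂ) • rhoFixedCoh α a + (1 - (p : ℂ)) • rhoFixedCoh α b =
      rhoFixedCoh α (p * a + (1 - p) * b) := by
  ext i j
  fin_cases i <;> fin_cases j <;> simp [rhoFixedCoh] <;> ring

theorem div_mul_add_one_sub_div_mul_one_sub {a₁ a₂ : ℝ} (h : 1 - 2 * a₁ ≠ 0) :
    (1 - a₁ - a₂) / (1 - 2 * a₁) * a₁ + (1 - (1 - a₁ - a₂) / (1 - 2 * a₁)) * (1 - a₁) = a₂ := by
  rw [div_mul_eq_mul_div, one_sub_div h, div_mul_eq_mul_div, ← add_div, div_eq_iff h]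
  ring

theorem div_mem_Icc_of_le_of_le_one_sub {a₁ a₂ : ℝ} (h12 : a₁ ≤ a₂) (h21 : a₂ ≤ 1 - a₁)
    (hne : a₁ ≠ 1 / 2) : (1 - a₁ - a₂) / (1 - 2 * a₁) ∈ Set.Icc 0 1 := by
  have hpos : 0 < 1 - 2 * a₁ := by
    have : a₁ < 1 / 2 := lt_of_le_of_ne (by linarith) hne
    linarith
  exact ⟨div_nonneg (by linarith) hpos.le, (div_le_one hpos).2 (by linarith)⟩

theorem fixed_coherence_mixed_unitary_transformation_general (α : ℝ)
    (a₁ a₂ : ℝ) (h12 : a₁ ≤ a₂) (h21 : a₂ ≤ 1 - a₁) (hne : a₁ ≠ 1 / 2)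
    (p : ℝ) (hp : p = (1 - a₁ - a₂) / (1 - 2 * a₁)) :
    0 ≤ p ∧ p ≤ 1 ∧
    rhoFixedCoh α a₂ =
      (p : ℂ) • rhoFixedCoh α a₁ + ((1 : ℂ) - (p : ℂ)) • (sigmaX * rhoFixedCoh α a₁ * sigmaX) := by
  subst hp
  obtain ⟨hp0, hp1⟩ := div_mem_Icc_of_le_of_le_one_sub h12 h21 hne
  have hden : 1 - 2 * a₁ ≠ 0 := fun h ↦ hne (by linarith)
  refine ⟨hp0, hp1, ?_⟩
  rw [sigmaX_mul_rhoFixedCoh_mul_sigmaX, smul_rhoFixedCoh_add_one_sub_smul_rhoFixedCoh,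
    div_mul_add_one_sub_div_mul_one_sub hden]

/-- **Transformations within a class of fixed coherence.**  For `a₁ ≤ a₂ ≤ 1 - a₁` with
`a₁ ≠ 1/2` and `p = (1 - a₁ - a₂)/(1 - 2a₁)`, one has `0 ≤ p ≤ 1` and
`ρ(a₂) = p ρ(a₁) + (1-p) σ_x ρ(a₁) σ_x`: any two such states of the same coherence `2α`
are connected by a mixed-unitary channel built from incoherent unitaries `I` and `σ_x`. -/
theorem fixed_coherence_mixed_unitary_transformation (α : ℝ) (hα : 0 ≤ α)
    (a₁ a₂ : ℝ) (h12 : a₁ ≤ a₂) (h21 : a₂ ≤ 1 - a₁) (hne : a₁ ≠ 1 / 2)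
    (p : ℝ) (hp : p = (1 - a₁ - a₂) / (1 - 2 * a₁)) :
    0 ≤ p ∧ p ≤ 1 ∧
    rhoFixedCoh α a₂ =
      (p : ℂ) • rhoFixedCoh α a₁ + ((1 : ℂ) - (p : ℂ)) • (sigmaX * rhoFixedCoh α a₁ * sigmaX) :=
  fixed_coherence_mixed_unitary_transformation_general α a₁ a₂ h12 h21 hne p hp
end
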